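/- Let ξ > 0 and δ > 0, let X be a random variable whose law has density ψ(·; ξ, δ) with respect to Lebesgue measure, and let F denote the cumulative distribution function of the chi-squared distribution with one degree of freedom. Then for every t ≥ ξ: P(X > t) + P(X < ξ²/t) = 1 − F(δ(t−ξ)²/(ξ²t)). -/

import Mathlib

open MeasureTheory Real ProbabilityTheory Set

noncomputable def invGaussPDF (ξ δ x : ℝ) : ℝ :=
  if 0 < x then
    Real.sqrt (δ / (2 * Real.pi * x ^ 3)) * Real.exp (-(δ * (x - ξ) ^ 2) / (2 * ξ ^ 2 * x))
  else 0

/-- CDF of the gamma distribution (removed from Mathlib; restored with its old definition). -/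
noncomputable def ProbabilityTheory.gammaCDFReal (a r : ℝ) : StieltjesFunction ℝ :=
  cdf (gammaMeasure a r)

lemma measurable_invGaussPDF (ξ δ : ℝ) : Measurable (invGaussPDF ξ δ) := by
  unfold invGaussPDF
  exact Measurable.ite measurableSet_Ioi (by fun_prop) measurable_const

lemma invGaussPDF_nonneg (ξ δ x : ℝ) : 0 ≤ invGaussPDF ξ δ x := by
  unfold invGaussPDF; split <;> positivity

lemma sqrt_eq_of_sq {a b : ℝ} (hb : 0 ≤ b) (h : b ^ 2 = a) : Real.sqrt a = b := by
  rw [← h, Real.sqrt_sq hb]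

lemma invGauss_key {ξ δ x : ℝ} (hξ : 0 < ξ) (hδ : 0 < δ) (hx : ξ < x) :
    invGaussPDF ξ δ x + (ξ ^ 2 / x ^ 2) * invGaussPDF ξ δ (ξ ^ 2 / x)
      = |δ * (x ^ 2 - ξ ^ 2) / (ξ ^ 2 * x ^ 2)| *
        gammaPDFReal (1/2) (1/2) (δ * (x - ξ) ^ 2 / (ξ ^ 2 * x)) := by
  have hx0 : 0 < x := hξ.trans hx
  have e2 : (Real.sqrt 2)^2 = 2 := sq_sqrt (by norm_num)
  have eπ : (Real.sqrt π)^2 = π := sq_sqrt Real.pi_pos.le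
  have eδ : (Real.sqrt δ)^2 = δ := sq_sqrt hδ.le
  have ex : (Real.sqrt x)^2 = x := sq_sqrt hx0.le
  have hx2 : 0 < x^2 - ξ^2 := by nlinarith
  have hπ : 0 < π := pi_pos
  have hy0 : 0 < ξ ^ 2 / x := by positivity
  have hxξ : 0 < x - ξ := by linarith
  have hs0 : 0 ≤ δ * (x - ξ) ^ 2 / (ξ ^ 2 * x) := by positivity
  rw [invGaussPDF, invGaussPDF, if_pos hx0, if_pos hy0, gammaPDFReal, if_pos hs0]
  have hexp1 : (-(δ * (ξ ^ 2 / x - ξ) ^ 2) / (2 * ξ ^ 2 * (ξ ^ 2 / x)))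
      = (-(δ * (x - ξ) ^ 2) / (2 * ξ ^ 2 * x)) := by
    field_simp; ring
  have hexp2 : (-((1:ℝ) / 2 * (δ * (x - ξ) ^ 2 / (ξ ^ 2 * x))))
      = (-(δ * (x - ξ) ^ 2) / (2 * ξ ^ 2 * x)) := by ring
  rw [hexp1, hexp2]
  have h1 : Real.sqrt (δ / (2 * π * x ^ 3)) = Real.sqrt δ / (Real.sqrt 2 * Real.sqrt π * x * Real.sqrt x) :=
    sqrt_eq_of_sq (by positivity) (by
      simp only [div_pow, mul_pow, e2, eπ, eδ, ex]; try ring)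
  have h2 : Real.sqrt (δ / (2 * π * (ξ ^ 2 / x) ^ 3))
      = Real.sqrt δ * x * Real.sqrt x / (Real.sqrt 2 * Real.sqrt π * ξ ^ 3) :=
    sqrt_eq_of_sq (by positivity) (by
      simp only [div_pow, mul_pow, e2, eπ, eδ, ex]; (try field_simp); try ring)
  have hΓ : Real.Gamma (1/2) = Real.sqrt π := Real.Gamma_one_half_eq
  have hC : ((1:ℝ)/2) ^ ((1:ℝ)/2) = (Real.sqrt 2)⁻¹ := by
    rw [← Real.sqrt_eq_rpow, one_div, Real.sqrt_inv]
  have hpow : (δ * (x - ξ) ^ 2 / (ξ ^ 2 * x)) ^ ((1:ℝ)/2 - 1)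
      = (Real.sqrt δ * (x - ξ) / (ξ * Real.sqrt x))⁻¹ := by
    have hs : Real.sqrt (δ * (x - ξ) ^ 2 / (ξ ^ 2 * x))
        = Real.sqrt δ * (x - ξ) / (ξ * Real.sqrt x) :=
      sqrt_eq_of_sq (by positivity) (by
        simp only [div_pow, mul_pow, eδ, ex]; (try field_simp); try ring)
    rw [show (1:ℝ)/2 - 1 = -(1/2) by norm_num, Real.rpow_neg hs0, ← Real.sqrt_eq_rpow, hs]
  rw [h1, h2, hΓ, hC, hpow, abs_of_pos (show 0 < δ * (x ^ 2 - ξ ^ 2) / (ξ ^ 2 * x ^ 2) by positivity)]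
  have hδa : δ = Real.sqrt δ ^ 2 := (sq_sqrt hδ.le).symm
  have hxd : x = Real.sqrt x ^ 2 := (sq_sqrt hx0.le).symm
  have ha : (0:ℝ) < Real.sqrt δ := Real.sqrt_pos.mpr hδ
  have hd : (0:ℝ) < Real.sqrt x := Real.sqrt_pos.mpr hx0
  have hb : (0:ℝ) < Real.sqrt 2 := by positivity
  have hc : (0:ℝ) < Real.sqrt π := Real.sqrt_pos.mpr hπ
  generalize Real.exp (-(δ * (x - ξ) ^ 2) / (2 * ξ ^ 2 * x)) = E
  have alg : ∀ a d : ℝ, 0 < a → 0 < d → ξ < d ^ 2 →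
      a / (Real.sqrt 2 * Real.sqrt π * d ^ 2 * d) * E
        + ξ ^ 2 / (d ^ 2) ^ 2 * (a * d ^ 2 * d / (Real.sqrt 2 * Real.sqrt π * ξ ^ 3) * E) =
      a ^ 2 * ((d ^ 2) ^ 2 - ξ ^ 2) / (ξ ^ 2 * (d ^ 2) ^ 2) *
        ((Real.sqrt 2)⁻¹ / Real.sqrt π * (a * (d ^ 2 - ξ) / (ξ * d))⁻¹ * E) := by
    intro a d ha hd hξd
    have h1 : (0:ℝ) < d ^ 2 - ξ := by linarith
    field_simp
    ring
  have := alg (Real.sqrt δ) (Real.sqrt x) ha hd (by rw [ex]; exact hx)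
  rw [eδ, ex] at this
  exact this

theorem invGauss_tail_split (ξ δ : ℝ) (hξ : 0 < ξ) (hδ : 0 < δ)
    {Ω : Type*} [MeasurableSpace Ω] (μ : Measure Ω) [IsProbabilityMeasure μ]
    (X : Ω → ℝ) (hX : Measurable X)
    (hlaw : Measure.map X μ = volume.withDensity (fun x => ENNReal.ofReal (invGaussPDF ξ δ x)))
    (t : ℝ) (ht : ξ ≤ t) :
    (μ {ω | t < X ω}).toReal + (μ {ω | X ω < ξ ^ 2 / t}).toReal =
      1 - gammaCDFReal (1 / 2) (1 / 2) (δ * (t - ξ) ^ 2 / (ξ ^ 2 * t)) := by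
  have ht0 : 0 < t := lt_of_lt_of_le hξ ht
  set ψ := invGaussPDF ξ δ with hψ
  set g : ℝ → ℝ := fun x => δ * (x - ξ) ^ 2 / (ξ ^ 2 * x) with hg
  set g' : ℝ → ℝ := fun x => δ * (x ^ 2 - ξ ^ 2) / (ξ ^ 2 * x ^ 2) with hg'
  set G : ℝ → ℝ := gammaPDFReal (1/2) (1/2) with hG
  -- total mass of ψ is 1
  have hprob : IsProbabilityMeasure (volume.withDensity (fun x => ENNReal.ofReal (ψ x))) := by
    rw [← hlaw]; exact Measure.isProbabilityMeasure_map hX.aemeasurable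
  have htotψ : ∫⁻ x, ENNReal.ofReal (ψ x) = 1 := by
    have := hprob.measure_univ
    rwa [withDensity_apply _ MeasurableSet.univ, Measure.restrict_univ] at this
  -- integrability helper
  have integrableOn_of_fin : ∀ (f : ℝ → ℝ), Measurable f → (∀ x, 0 ≤ f x) →
      (∫⁻ x, ENNReal.ofReal (f x)) = 1 → ∀ s : Set ℝ, IntegrableOn f s := by
    intro f hf h0 hfin s
    constructor
    · exact hf.aestronglyMeasurable.restrict
    · rw [hasFiniteIntegral_iff_ofReal (ae_of_all _ h0)]
      calc ∫⁻ x in s, ENNReal.ofReal (f x) ≤ ∫⁻ x, ENNReal.ofReal (f x) :=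
            setLIntegral_le_lintegral _ _
        _ < ⊤ := by rw [hfin]; exact ENNReal.one_lt_top
  have hψint : ∀ s : Set ℝ, IntegrableOn ψ s :=
    integrableOn_of_fin ψ (measurable_invGaussPDF ξ δ) (invGaussPDF_nonneg ξ δ) htotψ
  have hGint : ∀ s : Set ℝ, IntegrableOn G s :=
    integrableOn_of_fin G (measurable_gammaPDFReal _ _)
      (gammaPDFReal_nonneg (by norm_num) (by norm_num))
      (by rw [show (fun x => ENNReal.ofReal (G x)) = gammaPDF (1/2) (1/2) from rfl]
          exact lintegral_gammaPDF_eq_one (by norm_num) (by norm_num))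
  -- measures to integrals
  have hA : (μ {ω | t < X ω}).toReal = ∫ x in Ioi t, ψ x := by
    have h1 : μ {ω | t < X ω} = ∫⁻ x in Ioi t, ENNReal.ofReal (ψ x) := by
      rw [show {ω | t < X ω} = X ⁻¹' (Ioi t) from rfl, ← Measure.map_apply hX measurableSet_Ioi,
        hlaw, withDensity_apply _ measurableSet_Ioi]
    rw [h1]
    exact (integral_eq_lintegral_of_nonneg_ae (ae_of_all _ fun x => invGaussPDF_nonneg ξ δ x)
      ((measurable_invGaussPDF ξ δ).aestronglyMeasurable.restrict)).symm
  have hB : (μ {ω | X ω < ξ ^ 2 / t}).toReal = ∫ x in Iio (ξ ^ 2 / t), ψ x := by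
    have h1 : μ {ω | X ω < ξ ^ 2 / t} = ∫⁻ x in Iio (ξ ^ 2 / t), ENNReal.ofReal (ψ x) := by
      rw [show {ω | X ω < ξ ^ 2 / t} = X ⁻¹' (Iio (ξ ^ 2 / t)) from rfl,
        ← Measure.map_apply hX measurableSet_Iio, hlaw, withDensity_apply _ measurableSet_Iio]
    rw [h1]
    exact (integral_eq_lintegral_of_nonneg_ae (ae_of_all _ fun x => invGaussPDF_nonneg ξ δ x)
      ((measurable_invGaussPDF ξ δ).aestronglyMeasurable.restrict)).symm
  -- restrict to positive part
  have hBIoo : ∫ x in Iio (ξ ^ 2 / t), ψ x = ∫ x in Ioo 0 (ξ ^ 2 / t), ψ x := by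
    apply setIntegral_eq_of_subset_of_ae_diff_eq_zero measurableSet_Iio.nullMeasurableSet
      Ioo_subset_Iio_self
    refine ae_of_all _ fun x hx => ?_
    have hx0 : ¬ (0 < x) := fun h => hx.2 ⟨h, hx.1⟩
    simp only [hψ, invGaussPDF, if_neg hx0]
  -- the involution φ x = ξ²/x
  have hφd : ∀ x ∈ Ioi t, HasDerivWithinAt (fun y : ℝ => ξ ^ 2 / y) (-(ξ ^ 2) / x ^ 2) (Ioi t) x := by
    intro x hx
    have hx0 : 0 < x := ht0.trans hx
    have h := ((hasDerivAt_inv hx0.ne').const_mul (ξ ^ 2)).hasDerivWithinAt (s := Ioi t)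
    simp only [div_eq_mul_inv]
    refine h.congr_deriv ?_
    ring
  have hφinj : InjOn (fun y : ℝ => ξ ^ 2 / y) (Ioi t) := by
    intro a ha b hb h
    have ha0 : (0:ℝ) < a := ht0.trans ha
    have hb0 : (0:ℝ) < b := ht0.trans hb
    field_simp at h
    exact h.symm
  have himgφ : (fun y : ℝ => ξ ^ 2 / y) '' Ioi t = Ioo 0 (ξ ^ 2 / t) := by
    ext y
    simp only [mem_image, mem_Ioi, mem_Ioo]
    constructor
    · rintro ⟨x, hx, rfl⟩
      have hx0 : 0 < x := ht0.trans hx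
      exact ⟨by positivity, div_lt_div_of_pos_left (by positivity) ht0 hx⟩
    · rintro ⟨hy0, hyc⟩
      refine ⟨ξ ^ 2 / y, ?_, by field_simp⟩
      rw [lt_div_iff₀ hy0]
      rw [lt_div_iff₀ ht0] at hyc
      nlinarith
  have hBsub : ∫ x in Ioo 0 (ξ ^ 2 / t), ψ x = ∫ x in Ioi t, (ξ ^ 2 / x ^ 2) * ψ (ξ ^ 2 / x) := by
    rw [← himgφ, integral_image_eq_integral_abs_deriv_smul measurableSet_Ioi hφd hφinj]
    refine setIntegral_congr_fun measurableSet_Ioi fun x hx => ?_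
    have hx0 : 0 < x := ht0.trans hx
    rw [smul_eq_mul, abs_div, abs_neg, abs_of_nonneg (by positivity : (0:ℝ) ≤ ξ ^ 2),
      abs_of_nonneg (by positivity : (0:ℝ) ≤ x ^ 2)]
  -- the map g
  have hgmono : ∀ a b : ℝ, ξ ≤ a → a < b → g a < g b := by
    intro a b ha hab
    have ha0 : 0 < a := lt_of_lt_of_le hξ ha
    have hb0 : 0 < b := ha0.trans hab
    have key : g b - g a = δ * (b - a) * (a * b - ξ ^ 2) / (ξ ^ 2 * (a * b)) := by
      simp only [hg]; field_simp; ring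
    have h1 : 0 < a * b - ξ ^ 2 := by nlinarith
    have h2 : 0 < δ * (b - a) * (a * b - ξ ^ 2) / (ξ ^ 2 * (a * b)) :=
      div_pos (mul_pos (mul_pos hδ (sub_pos.mpr hab)) h1)
        (mul_pos (pow_pos hξ 2) (mul_pos ha0 hb0))
    linarith
  have hginj : InjOn g (Ioi t) := by
    intro a ha b hb h
    by_contra hne
    rcases lt_or_gt_of_ne hne with h1 | h1
    · exact absurd h (ne_of_lt (hgmono a b (ht.trans (le_of_lt ha)) h1))
    · exact absurd h.symm (ne_of_lt (hgmono b a (ht.trans (le_of_lt hb)) h1))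
  have hgd : ∀ x ∈ Ioi t, HasDerivWithinAt g (g' x) (Ioi t) x := by
    intro x hx
    have hx0 : 0 < x := ht0.trans hx
    have h1 : HasDerivAt (fun y : ℝ => δ * (y - ξ) ^ 2) (δ * (2 * (x - ξ))) x := by
      simpa using (((hasDerivAt_id x).sub_const ξ).pow 2).const_mul δ
    have h2 : HasDerivAt (fun y : ℝ => ξ ^ 2 * y) (ξ ^ 2) x := by
      simpa using (hasDerivAt_id x).const_mul (ξ ^ 2)
    have h3 := (h1.div h2 (by positivity)).hasDerivWithinAt (s := Ioi t)
    refine h3.congr_deriv ?_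
    simp only [hg']
    field_simp
    ring
  have hgcont : ContinuousOn g (Ici t) := by
    apply ContinuousOn.div (by fun_prop) (by fun_prop)
    intro x hx
    have hx0 : 0 < x := lt_of_lt_of_le ht0 hx
    exact (mul_pos (pow_pos hξ 2) hx0).ne'
  have htend : Filter.Tendsto g Filter.atTop Filter.atTop := by
    apply Filter.tendsto_atTop_mono' Filter.atTop
      (show ∀ᶠ x in Filter.atTop, δ / ξ ^ 2 * (x - 2 * ξ) ≤ g x from ?_)
    · have h1 : Filter.Tendsto (fun x : ℝ => x - 2 * ξ) Filter.atTop Filter.atTop :=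
        Filter.tendsto_atTop_add_const_right _ (-(2 * ξ)) Filter.tendsto_id |>.congr
          (fun x => by simp only [id]; ring)
      exact Filter.Tendsto.const_mul_atTop (by positivity) h1
    · filter_upwards [Filter.eventually_gt_atTop 0] with x hx0
      have key : g x - δ / ξ ^ 2 * (x - 2 * ξ) = δ / x := by
        simp only [hg]; field_simp; ring
      have : 0 < δ / x := by positivity
      linarith
  have himgg : g '' Ioi t = Ioi (g t) := by
    apply Subset.antisymm
    · rintro y ⟨x, hx, rfl⟩
      exact hgmono t x ht hx
    · intro y hy
      obtain ⟨M, hMy, hMt⟩ :=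
        ((htend.eventually_ge_atTop y).and (Filter.eventually_ge_atTop t)).exists
      have hmem : y ∈ Icc (g t) (g M) := ⟨le_of_lt hy, hMy⟩
      obtain ⟨c, hc, hcy⟩ := intermediate_value_Icc hMt (hgcont.mono Icc_subset_Ici_self) hmem
      refine ⟨c, ?_, hcy⟩
      rcases eq_or_lt_of_le hc.1 with h | h
      · exact absurd (h ▸ hcy) (ne_of_lt hy)
      · exact h
  have hRHS2 : ∫ x in Ioi (g t), G x = ∫ x in Ioi t, |g' x| * G (g x) := by
    rw [← himgg, integral_image_eq_integral_abs_deriv_smul measurableSet_Ioi hgd hginj]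
    simp only [smul_eq_mul]
  -- second integrand is integrable
  have hint2 : IntegrableOn (fun x => (ξ ^ 2 / x ^ 2) * ψ (ξ ^ 2 / x)) (Ioi t) := by
    have h := (integrableOn_image_iff_integrableOn_abs_deriv_smul measurableSet_Ioi hφd hφinj
      ψ).mp (by rw [himgφ]; exact hψint _)
    refine h.congr_fun (fun x hx => ?_) measurableSet_Ioi
    have hx0 : 0 < x := ht0.trans hx
    dsimp only
    rw [smul_eq_mul, abs_div, abs_neg, abs_of_nonneg (by positivity : (0:ℝ) ≤ ξ ^ 2),
      abs_of_nonneg (by positivity : (0:ℝ) ≤ x ^ 2)]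
  -- 1 - CDF = tail integral
  have htail : 1 - gammaCDFReal (1/2) (1/2) (g t) = ∫ x in Ioi (g t), G x := by
    have htotG : ∫ x, G x = 1 := by
      rw [integral_eq_lintegral_of_nonneg_ae
        (ae_of_all _ fun x => gammaPDFReal_nonneg (by norm_num) (by norm_num) x)
        (measurable_gammaPDFReal _ _).aestronglyMeasurable,
        show (fun x => ENNReal.ofReal (G x)) = gammaPDF (1/2) (1/2) from rfl,
        lintegral_gammaPDF_eq_one (by norm_num) (by norm_num)]
      rfl
    have hsplit := intervalIntegral.integral_Iic_add_Ioi (b := g t) (hGint _) (hGint _)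
    rw [gammaCDFReal, cdf_gammaMeasure_eq_integral (by norm_num) (by norm_num)]
    rw [htotG] at hsplit
    linarith
  -- assemble
  rw [hA, hB, hBIoo, hBsub,
    ← integral_add (hψint (Ioi t)) hint2]
  have hkey : ∫ x in Ioi t, (ψ x + ξ ^ 2 / x ^ 2 * ψ (ξ ^ 2 / x)) =
      ∫ x in Ioi t, |g' x| * G (g x) := by
    refine setIntegral_congr_fun measurableSet_Ioi fun x hx => ?_
    exact invGauss_key hξ hδ (lt_of_le_of_lt ht hx)
  rw [hkey, ← hRHS2, ← htail]
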